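/- arXiv:1503.01864 — 5 statements merged into one kernel-verified Lean document; each statement's English description precedes it below -/
import Mathlib

section
/- If the singular values satisfy the geometric decay σ_j = c ρ^{-j} with ρ > 1 (i.e. severely ill-posed with rate ρ = e^{α}), then for every i₀ ≤ k, |L_{i₀}(0)| = ∏_{j=1,j≠i₀}^{k} σ_j²/|σ_j² − σ_{i₀}²| is bounded above by ∏_{j=1}^{∞} 1/(1 − ρ^{-2j})², a finite constant independent of k. -/
/-!
Write `q = ρ⁻² ∈ (0, 1)`, so that `σ_j² = c² q^j`. The `j`-th factor of `|L_{i₀}(0)|`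
equals `q^j / |q^j - q^{i₀}|`, which is at most `1 / (1 - q^d)` with `d = |j - i₀|`.
Each distance `d ≥ 1` occurs for at most two indices `j`, and every factor `1 / (1 - q^d)`
is at least `1`, so the finite product is bounded by the convergent product
`∏_{d ≥ 1} (1 - q^d)⁻²`.
-/

open Finset

theorem Multipliable.prod_le_tprod_of_one_le {ι R : Type*} [CommSemiring R] [PartialOrder R]
    [IsOrderedRing R] [TopologicalSpace R] [OrderClosedTopology R] {f : ι → R}
    (hf : Multipliable f) (h1 : ∀ i, 1 ≤ f i) (s : Finset ι) :
    ∏ i ∈ s, f i ≤ ∏' i, f i :=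
  ge_of_tendsto hf.hasProd <| Filter.eventually_atTop.2 ⟨s, fun _ hst ↦
    prod_le_prod_of_subset_of_one_le hst (fun i _ ↦ zero_le_one.trans (h1 i))
      fun i _ _ ↦ h1 i⟩

theorem Finset.prod_comp_le_prod_image_pow {ι κ R : Type*} [DecidableEq κ] [CommSemiring R]
    [PartialOrder R] [IsOrderedRing R] {s : Finset ι} {f : κ → R} {g : ι → κ} {n : ℕ}
    (h1 : ∀ b, 1 ≤ f b) (hfib : ∀ b, #{a ∈ s | g a = b} ≤ n) :
    ∏ a ∈ s, f (g a) ≤ ∏ b ∈ s.image g, f b ^ n := by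
  rw [prod_comp]
  exact prod_le_prod (fun b _ ↦ pow_nonneg (zero_le_one.trans (h1 b)) _)
    fun b _ ↦ pow_le_pow_right₀ (h1 b) (hfib b)

theorem Nat.card_filter_dist_sub_one_eq_le_two (s : Finset ℕ) (i n : ℕ) :
    #{j ∈ s.erase i | Nat.dist i j - 1 = n} ≤ 2 := by
  refine (card_le_card fun j hj ↦ ?_).trans (card_le_two (a := i - (n + 1)) (b := i + (n + 1)))
  simp only [mem_filter, mem_erase, mem_insert, mem_singleton] at hj ⊢
  unfold Nat.dist at hj
  omega

theorem multipliable_inv_one_sub_pow_succ {q : ℝ} (hq0 : 0 ≤ q) (hq1 : q < 1) :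
    Multipliable fun n : ℕ ↦ (1 - q ^ (n + 1))⁻¹ := by
  have hsum : Summable fun n : ℕ ↦ ‖-q ^ (n + 1)‖ := by
    simpa [abs_of_nonneg hq0] using
      (summable_nat_add_iff 1).mpr (summable_geometric_of_lt_one hq0 hq1)
  have hne (n : ℕ) : 1 + -q ^ (n + 1) ≠ 0 := by
    have := pow_lt_one₀ hq0 hq1 n.add_one_ne_zero
    linarith
  simpa [sub_eq_add_neg] using (multipliable_one_add_of_summable hsum).inv₀
    (tprod_one_add_ne_zero_of_summable hne hsum)

theorem pow_div_abs_pow_sub_pow_le {q : ℝ} (hq0 : 0 < q) (hq1 : q < 1) {i j : ℕ}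
    (hij : i ≠ j) :
    q ^ j / |q ^ j - q ^ i| ≤ (1 - q ^ Nat.dist i j)⁻¹ := by
  have hd : 0 < 1 - q ^ Nat.dist i j :=
    sub_pos.2 (pow_lt_one₀ hq0.le hq1 (Nat.dist_pos_of_ne hij).ne')
  rcases hij.lt_or_gt with hlt | hgt
  · obtain ⟨d, rfl⟩ := Nat.exists_eq_add_of_le hlt.le
    rw [Nat.dist_eq_sub_of_le hlt.le, Nat.add_sub_cancel_left] at hd ⊢
    calc q ^ (i + d) / |q ^ (i + d) - q ^ i| = q ^ d / (1 - q ^ d) := by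
          rw [pow_add, abs_sub_comm, ← mul_one_sub, abs_of_pos (by positivity)]
          field_simp
      _ ≤ (1 - q ^ d)⁻¹ := by
          rw [inv_eq_one_div]
          gcongr
          exact pow_le_one₀ hq0.le hq1.le
  · obtain ⟨d, rfl⟩ := Nat.exists_eq_add_of_le hgt.le
    rw [Nat.dist_eq_sub_of_le_right hgt.le, Nat.add_sub_cancel_left] at hd ⊢
    rw [pow_add, ← mul_one_sub, abs_of_pos (by positivity)]
    exact (div_mul_cancel_left₀ (by positivity) _).le

theorem lagrange_at_zero_bounded_geometric_general (c ρ : ℝ) (hc : 0 < c) (hρ : 1 < ρ)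
    (σ : ℕ → ℝ) (hσ : ∀ j, σ j = c * ρ⁻¹ ^ j)
    (k i₀ : ℕ) :
    (∏ j ∈ (Finset.Icc 1 k).erase i₀, σ j ^ 2 / |σ j ^ 2 - σ i₀ ^ 2|) ≤
      ∏' j : ℕ, ((1 - ρ⁻¹ ^ (2 * (j + 1)))⁻¹) ^ 2 := by
  set q := ρ⁻¹ ^ 2
  have hq0 : 0 < q := by positivity
  have hq1 : q < 1 := pow_lt_one₀ (by positivity) (inv_lt_one_of_one_lt₀ hρ) two_ne_zero
  set F : ℕ → ℝ := fun n ↦ (1 - q ^ (n + 1))⁻¹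
  have hF1 (n : ℕ) : 1 ≤ F n :=
    one_le_inv₀ (sub_pos.2 (pow_lt_one₀ hq0.le hq1 n.add_one_ne_zero)) |>.2 (by simp [hq0.le])
  have hσq (j : ℕ) : σ j ^ 2 = c ^ 2 * q ^ j := by rw [hσ, mul_pow, ← pow_mul, ← pow_mul']
  calc (∏ j ∈ (Icc 1 k).erase i₀, σ j ^ 2 / |σ j ^ 2 - σ i₀ ^ 2|)
      = ∏ j ∈ (Icc 1 k).erase i₀, q ^ j / |q ^ j - q ^ i₀| := by
        refine prod_congr rfl fun j _ ↦ ?_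
        rw [hσq, hσq, ← mul_sub, abs_mul, abs_of_pos (by positivity),
          mul_div_mul_left _ _ (by positivity)]
    _ ≤ ∏ j ∈ (Icc 1 k).erase i₀, F (Nat.dist i₀ j - 1) := by
        refine prod_le_prod (fun j _ ↦ by positivity) fun j hj ↦ ?_
        have hij := (ne_of_mem_erase hj).symm
        simpa [F, Nat.sub_add_cancel (Nat.dist_pos_of_ne hij)] using
          pow_div_abs_pow_sub_pow_le hq0 hq1 hij
    _ ≤ ∏ n ∈ ((Icc 1 k).erase i₀).image (Nat.dist i₀ · - 1), F n ^ 2 :=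
        prod_comp_le_prod_image_pow hF1 (Nat.card_filter_dist_sub_one_eq_le_two _ i₀)
    _ ≤ ∏' n, F n ^ 2 :=
        ((multipliable_inv_one_sub_pow_succ hq0.le hq1).pow 2).prod_le_tprod_of_one_le
          (fun n ↦ one_le_pow₀ (hF1 n)) _
    _ = ∏' j : ℕ, ((1 - ρ⁻¹ ^ (2 * (j + 1)))⁻¹) ^ 2 := by simp only [F, q, ← pow_mul]

/-- for geometrically decaying singular values `σ_j = c ρ^{-j}` (ρ > 1),
for every `1 ≤ i₀ ≤ k`, the Lagrange value
`|L_{i₀}(0)| = ∏_{j=1,j≠i₀}^{k} σ_j²/|σ_j² − σ_{i₀}²|` is bounded above by the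
finite constant `∏_{j=1}^{∞} (1/(1 − ρ^{-2j}))²`, independent of `k`. -/
theorem lagrange_at_zero_bounded_geometric (c ρ : ℝ) (hc : 0 < c) (hρ : 1 < ρ)
    (σ : ℕ → ℝ) (hσ : ∀ j, σ j = c * ρ⁻¹ ^ j)
    (k i₀ : ℕ) (hi₀ : 1 ≤ i₀) (hik : i₀ ≤ k) :
    (∏ j ∈ (Finset.Icc 1 k).erase i₀, σ j ^ 2 / |σ j ^ 2 - σ i₀ ^ 2|) ≤
      ∏' j : ℕ, ((1 - ρ⁻¹ ^ (2 * (j + 1)))⁻¹) ^ 2 :=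
  lagrange_at_zero_bounded_geometric_general c ρ hc hρ σ hσ k i₀
end

section
/- Let A ∈ ℝ^{m×n} with SVD having distinct nonzero singular values, and let b have nonzero components in all left singular directions. Then the Krylov subspace K_k(AᵀA, Aᵀb) = span{Aᵀb, (AᵀA)Aᵀb, ..., (AᵀA)^{k-1}Aᵀb} has dimension exactly k for every k ≤ n, and it equals the column span of V·[I; Δ_k] where Δ_k = D₂ T_{k2} T_{k1}^{-1} D₁^{-1} in the notation below. -/
/-! Since `AᵀA V = V diag(σ²)` and `Aᵀb = V (σ ⊙ d)`, the Krylov matrix is `V · W` with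
`W = diag(σ ⊙ d) · (σᵢ^{2j})`. The top `k × k` block `D₁T₁` of `W` is invertible (nonzero
diagonal times a Vandermonde matrix with distinct nodes `σᵢ²`) and the bottom block is
`D₂T₂ = Δ D₁T₁`, so `W = [I; Δ] · D₁T₁`. Hence the Krylov matrix is `Z · D₁T₁`: it has the
column span of `Z`, whose rank is that of `[I; Δ]`, namely `k`. -/

open Matrix

namespace Matrix

variable {R : Type*}

section

variable [CommRing R] {n : Type*} [Fintype n] [DecidableEq n]

def krylovMatrix (B : Matrix n n R) (v : n → R) (k : ℕ) : Matrix n (Fin k) R :=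
  of fun i j => (B ^ (j : ℕ) *ᵥ v) i

theorem krylovMatrix_mulVec_eq {B V : Matrix n n R} {μ : n → R}
    (hBV : B * V = V * diagonal μ) (w : n → R) (k : ℕ) :
    krylovMatrix B (V *ᵥ w) k = V * diagonal w * of fun i (j : Fin k) => μ i ^ (j : ℕ) := by
  ext i j
  have hpow : B ^ (j : ℕ) * V = V * diagonal (μ ^ (j : ℕ)) := by
    rw [← diagonal_pow]
    exact (SemiconjBy.pow_right hBV.symm j).symm
  rw [krylovMatrix, of_apply, mulVec_mulVec, hpow, mul_apply]
  simp only [mulVec, dotProduct, mul_diagonal, of_apply, Pi.pow_apply]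
  exact Finset.sum_congr rfl fun l _ => mul_right_comm _ _ _

theorem span_range_col_mul_of_isUnit {m : Type*} (M : Matrix m n R)
    {N : Matrix n n R} (hN : IsUnit N) :
    Submodule.span R (Set.range (M * N).col) = Submodule.span R (Set.range M.col) := by
  rw [← range_mulVecLin, ← range_mulVecLin, mulVecLin_mul]
  exact LinearMap.range_comp_of_range_eq_top _
    (LinearMap.range_eq_top.mpr (mulVec_surjective_iff_isUnit.mpr hN))

end

section RectDiagonal

variable [CommRing R] {m n : ℕ}

/-- The `m × n` matrix `[Σ; 0]` carrying `σ` on its main diagonal. -/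
def rectDiagonal (m : ℕ) (σ : Fin n → R) : Matrix (Fin m) (Fin n) R :=
  of fun i j => if (i : ℕ) = (j : ℕ) then σ j else 0

theorem rectDiagonal_apply_castLE (h : n ≤ m) (σ : Fin n → R) (i j : Fin n) :
    rectDiagonal m σ (Fin.castLE h i) j = diagonal σ i j := by
  by_cases hij : i = j <;> simp [rectDiagonal, Fin.val_eq_val, hij]

theorem rectDiagonal_transpose_mulVec (h : n ≤ m) (σ : Fin n → R) (c : Fin m → R) :
    (rectDiagonal m σ)ᵀ *ᵥ c = fun j => σ j * c (Fin.castLE h j) := by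
  ext j
  rw [mulVec, dotProduct, Finset.sum_eq_single (Fin.castLE h j)]
  · simp [rectDiagonal_apply_castLE]
  · intro i _ hi
    have : (i : ℕ) ≠ j := fun hij => hi (Fin.ext hij)
    simp [rectDiagonal, this]
  · simp

theorem rectDiagonal_transpose_mul_self (h : n ≤ m) (σ : Fin n → R) :
    (rectDiagonal m σ)ᵀ * rectDiagonal m σ = diagonal fun i => σ i ^ 2 := by
  ext i j
  change ((rectDiagonal m σ)ᵀ *ᵥ fun l => rectDiagonal m σ l j) i = _
  simp only [rectDiagonal_transpose_mulVec h, rectDiagonal_apply_castLE]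
  by_cases hij : i = j <;> simp [hij, sq]

end RectDiagonal

section StackIdentity

variable [CommRing R] {k r : ℕ}

/-- The block matrix `[I; Δ]`. -/
def stackIdentity (Δ : Matrix (Fin r) (Fin k) R) : Matrix (Fin (k + r)) (Fin k) R :=
  of fun i j => if h : (i : ℕ) < k then (if (⟨(i : ℕ), h⟩ : Fin k) = j then 1 else 0)
    else Δ ⟨(i : ℕ) - k, by have := i.isLt; omega⟩ j

@[simp]
theorem stackIdentity_castAdd (Δ : Matrix (Fin r) (Fin k) R) (i j : Fin k) :
    stackIdentity Δ (Fin.castAdd r i) j = (1 : Matrix (Fin k) (Fin k) R) i j := by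
  simp [stackIdentity, one_apply]

@[simp]
theorem stackIdentity_natAdd (Δ : Matrix (Fin r) (Fin k) R) (i : Fin r) (j : Fin k) :
    stackIdentity Δ (Fin.natAdd k i) j = Δ i j := by
  simp [stackIdentity]

theorem stackIdentity_mul_submatrix_castAdd {Δ : Matrix (Fin r) (Fin k) R}
    {N : Matrix (Fin (k + r)) (Fin k) R}
    (hΔ : Δ * N.submatrix (Fin.castAdd r) id = N.submatrix (Fin.natAdd k) id) :
    stackIdentity Δ * N.submatrix (Fin.castAdd r) id = N := by
  ext i j
  induction i using Fin.addCases with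
  | left i => simp [mul_apply, one_apply]
  | right i =>
    simp only [mul_apply, stackIdentity_natAdd]
    exact congrFun (congrFun hΔ i) j

theorem rank_stackIdentity [Nontrivial R] (Δ : Matrix (Fin r) (Fin k) R) :
    (stackIdentity Δ).rank = k := by
  refine le_antisymm (rank_le_width _) ?_
  calc k = (1 : Matrix (Fin k) (Fin k) R).rank := by simp
    _ = ((stackIdentity Δ).submatrix (Fin.castAdd r) id).rank := by
      congr 1; ext i j; simp
    _ ≤ (stackIdentity Δ).rank := rank_submatrix_le _ _ _

end StackIdentity

theorem isUnit_det_diagonal_mul_vandermonde {K : Type*} [Field K] {k : ℕ} {w v : Fin k → K}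
    (hw : ∀ i, w i ≠ 0) (hv : Function.Injective v) :
    IsUnit (diagonal w * vandermonde v).det := by
  rw [det_mul, det_diagonal]
  exact (Finset.prod_ne_zero_iff.mpr fun i _ => hw i).isUnit.mul
    (det_vandermonde_ne_zero_iff.mpr hv).isUnit

theorem transpose_mul_self_mul_eq [CommRing R] {m n : Type*} [Fintype m] [Fintype n]
    [DecidableEq m] [DecidableEq n] {A S : Matrix m n R} {U : Matrix m m R} {V : Matrix n n R}
    (hA : A = U * S * Vᵀ) (hU : Uᵀ * U = 1) (hV : Vᵀ * V = 1) :
    Aᵀ * A * V = V * (Sᵀ * S) := by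
  subst hA
  simp only [transpose_mul, transpose_transpose, Matrix.mul_assoc]
  rw [hV, Matrix.mul_one, ← Matrix.mul_assoc Uᵀ, hU, Matrix.one_mul]

end Matrix

/-- let `A = U [Σ;0] Vᵀ ∈ ℝ^{m×n}` (`n = k + r`) have distinct positive
singular values `σ₁ > ... > σ_n > 0`, and suppose `u_iᵀ b ≠ 0` for all `i ≤ n`.
Then the Krylov subspace `K_k(AᵀA, Aᵀb)` has dimension exactly `k`, and it equals
the column span of `V·[I; Δ_k]` where `Δ_k = D₂ T_{k2} T_{k1}⁻¹ D₁⁻¹`. -/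
theorem krylov_dim_and_span (m k r : ℕ) (hmn : k + r ≤ m)
    (A : Matrix (Fin m) (Fin (k + r)) ℝ)
    (U : Matrix (Fin m) (Fin m) ℝ) (hU : U.transpose * U = 1)
    (V : Matrix (Fin (k + r)) (Fin (k + r)) ℝ)
    (hV : V.transpose * V = 1)
    (σ : Fin (k + r) → ℝ) (hσpos : ∀ i, 0 < σ i) (hσanti : StrictAnti σ)
    (hA : A = U * (Matrix.of fun (i : Fin m) (j : Fin (k + r)) =>
      if (i : ℕ) = (j : ℕ) then σ j else 0) * V.transpose)
    (b : Fin m → ℝ)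
    (d : Fin (k + r) → ℝ) (hd : d = fun i => ∑ row, U row (Fin.castLE hmn i) * b row)
    (hb : ∀ i, d i ≠ 0)
    (D₁ : Matrix (Fin k) (Fin k) ℝ)
    (hD₁ : D₁ = Matrix.diagonal fun j => σ (Fin.castAdd r j) * d (Fin.castAdd r j))
    (D₂ : Matrix (Fin r) (Fin r) ℝ)
    (hD₂ : D₂ = Matrix.diagonal fun i => σ (Fin.natAdd k i) * d (Fin.natAdd k i))
    (T₁ : Matrix (Fin k) (Fin k) ℝ)
    (hT₁ : T₁ = Matrix.of fun i (j : Fin k) => (σ (Fin.castAdd r i) ^ 2) ^ (j : ℕ))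
    (T₂ : Matrix (Fin r) (Fin k) ℝ)
    (hT₂ : T₂ = Matrix.of fun i (j : Fin k) => (σ (Fin.natAdd k i) ^ 2) ^ (j : ℕ))
    (Δ : Matrix (Fin r) (Fin k) ℝ) (hΔ : Δ = D₂ * T₂ * T₁⁻¹ * D₁⁻¹)
    (Z : Matrix (Fin (k + r)) (Fin k) ℝ)
    (hZ : Z = V * Matrix.of fun (i : Fin (k + r)) (j : Fin k) =>
      if h : (i : ℕ) < k then (if (⟨(i : ℕ), h⟩ : Fin k) = j then (1 : ℝ) else 0)
      else Δ ⟨(i : ℕ) - k, by have := i.isLt; omega⟩ j) :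
    Module.finrank ℝ
        (Submodule.span ℝ (Set.range fun i : Fin k =>
          ((A.transpose * A) ^ (i : ℕ)) *ᵥ (A.transpose *ᵥ b))) = k ∧
      Submodule.span ℝ (Set.range fun i : Fin k =>
          ((A.transpose * A) ^ (i : ℕ)) *ᵥ (A.transpose *ᵥ b)) =
        Submodule.span ℝ (Set.range fun j : Fin k => Z.transpose j) := by
  replace hA : A = U * rectDiagonal m σ * Vᵀ := hA
  replace hZ : Z = V * stackIdentity Δ := hZ
  set W : Matrix (Fin (k + r)) (Fin k) ℝ :=
    diagonal (fun i => σ i * d i) * of fun i (j : Fin k) => (σ i ^ 2) ^ (j : ℕ)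
  have hW₁ : W.submatrix (Fin.castAdd r) id = D₁ * T₁ := by
    ext; simp [W, hD₁, hT₁, diagonal_mul]
  have hW₂ : W.submatrix (Fin.natAdd k) id = D₂ * T₂ := by
    ext; simp [W, hD₂, hT₂, diagonal_mul]
  have hN : IsUnit (D₁ * T₁).det := by
    have hσ₁ : Function.Injective fun i : Fin k => σ (Fin.castAdd r i) ^ 2 := fun i j hij =>
      Fin.castAdd_injective k r <| hσanti.injective <|
        (sq_eq_sq₀ (hσpos _).le (hσpos _).le).mp hij
    rw [hD₁, hT₁]
    exact isUnit_det_diagonal_mul_vandermonde (fun i => mul_ne_zero (hσpos _).ne' (hb _)) hσ₁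
  have hΔN : Δ * (D₁ * T₁) = D₂ * T₂ := by
    rw [hΔ, Matrix.mul_assoc _ T₁⁻¹, ← Matrix.mul_inv_rev, nonsing_inv_mul_cancel_right _ _ hN]
  have hAb : Aᵀ *ᵥ b = V *ᵥ fun i => σ i * d i := by
    rw [hA, transpose_mul, transpose_mul, transpose_transpose, ← mulVec_mulVec,
      ← mulVec_mulVec, rectDiagonal_transpose_mulVec hmn, hd]
    rfl
  have hAV : Aᵀ * A * V = V * diagonal fun i => σ i ^ 2 := by
    rw [transpose_mul_self_mul_eq hA hU hV, rectDiagonal_transpose_mul_self hmn]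
  have hK : krylovMatrix (Aᵀ * A) (Aᵀ *ᵥ b) k = Z * (D₁ * T₁) := by
    rw [hAb, krylovMatrix_mulVec_eq hAV, Matrix.mul_assoc, hZ, Matrix.mul_assoc, ← hW₁,
      stackIdentity_mul_submatrix_castAdd (by rw [hW₁, hW₂, hΔN])]
  constructor
  · change Module.finrank ℝ (Submodule.span ℝ (Set.range (krylovMatrix _ _ k).col)) = k
    rw [← rank_eq_finrank_span_cols, hK, rank_mul_eq_left_of_isUnit_det _ _ hN, hZ,
      rank_mul_eq_right_of_isUnit_det _ _ (isUnit_det_of_left_inverse hV), rank_stackIdentity]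
  · change Submodule.span ℝ (Set.range (krylovMatrix _ _ k).col) = _
    rw [hK, span_range_col_mul_of_isUnit _ ((isUnit_iff_isUnit_det _).mpr hN)]
    rfl
end

section
/- Under the k-step Lanczos bidiagonalization relations, the off-diagonal coefficient satisfies α_{k+1} ≤ γ_k, where γ_k = ‖A − P_{k+1} B_k Q_kᵀ‖ in the spectral norm. -/
open Matrix

/-- Spectral (operator 2-) norm of a real matrix. -/
noncomputable def specNorm {m n : ℕ} (M : Matrix (Fin m) (Fin n) ℝ) : ℝ :=
  ‖LinearMap.toContinuousLinearMap (Matrix.toEuclideanLin M)‖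

/-!
Take `u = P e_{k+1}`, a unit vector because `P` has orthonormal columns. Pairing the second
Lanczos relation with `u` and `q` gives `uᵀ A q = α`, since `q ⟂ range Q` kills the `Q Bᵀ` term;
for the same reason `P B Qᵀ q = 0`, so `α = uᵀ (A − P B Qᵀ) q` is a value of the bilinear form of
`A − P B Qᵀ` on two unit vectors and hence at most its spectral norm.
-/

theorem norm_toLp_eq_one_of_dotProduct_self {ι : Type*} [Fintype ι] {v : ι → ℝ}
    (hv : v ⬝ᵥ v = 1) : ‖WithLp.toLp 2 v‖ = 1 := by
  rw [norm_eq_sqrt_real_inner, EuclideanSpace.inner_toLp_toLp]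
  simp [hv]

theorem dotProduct_mulVec_le_specNorm {m n : ℕ} (M : Matrix (Fin m) (Fin n) ℝ)
    {u : Fin m → ℝ} {v : Fin n → ℝ} (hu : u ⬝ᵥ u = 1) (hv : v ⬝ᵥ v = 1) :
    u ⬝ᵥ (M *ᵥ v) ≤ specNorm M := by
  set T := LinearMap.toContinuousLinearMap (Matrix.toEuclideanLin M)
  have hTv : T (WithLp.toLp 2 v) = WithLp.toLp 2 (M *ᵥ v) := rfl
  calc u ⬝ᵥ (M *ᵥ v) = inner ℝ (WithLp.toLp 2 u) (T (WithLp.toLp 2 v)) := by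
        rw [hTv, EuclideanSpace.inner_toLp_toLp, dotProduct_comm]; rfl
    _ ≤ ‖WithLp.toLp 2 u‖ * ‖T (WithLp.toLp 2 v)‖ := real_inner_le_norm _ _
    _ ≤ 1 * (‖T‖ * ‖WithLp.toLp 2 v‖) := by
        rw [norm_toLp_eq_one_of_dotProduct_self hu]
        gcongr
        exact T.le_opNorm _
    _ = specNorm M := by rw [norm_toLp_eq_one_of_dotProduct_self hv, one_mul, mul_one]; rfl

section

variable {R : Type*} [CommRing R]

theorem mulVec_dotProduct_mulVec_of_transpose_mul_self {ι κ : Type*} [Fintype ι] [Fintype κ]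
    [DecidableEq κ] {P : Matrix ι κ R} (hP : Pᵀ * P = 1) (x : κ → R) :
    (P *ᵥ x) ⬝ᵥ (P *ᵥ x) = x ⬝ᵥ x := by
  rw [dotProduct_mulVec, ← mulVec_transpose, mulVec_mulVec, hP, one_mulVec]

theorem sub_mul_transpose_mulVec_of_transpose_mulVec_eq_zero {ι κ μ : Type*} [Fintype κ]
    [Fintype μ] (A : Matrix ι κ R) (C : Matrix ι μ R) {Q : Matrix κ μ R} {q : κ → R}
    (hqQ : Qᵀ *ᵥ q = 0) : (A - C * Qᵀ) *ᵥ q = A *ᵥ q := by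
  rw [sub_mulVec, ← mulVec_mulVec, hqQ, mulVec_zero, sub_zero]

theorem of_mul_ite_mulVec_single {ι κ : Type*} [Fintype κ] [DecidableEq κ]
    (c : R) (q : ι → R) (l : κ) :
    (of fun i j => c * q i * if j = l then 1 else 0) *ᵥ Pi.single l 1 = c • q := by
  ext i
  simp [mulVec, dotProduct, Pi.single_apply]

theorem lanczos_dotProduct_eq {ι κ μ ν : Type*} [Fintype ι] [Fintype κ] [Fintype μ]
    [Fintype ν] [DecidableEq ν] {A : Matrix ι κ R} {Q : Matrix κ μ R} {P : Matrix ι ν R}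
    {B : Matrix ν μ R} {q : κ → R} (hq : q ⬝ᵥ q = 1) (hqQ : Qᵀ *ᵥ q = 0) {α : R} {l : ν}
    (hATP : Aᵀ * P = Q * Bᵀ + of fun i j => α * q i * if j = l then 1 else 0) :
    (P *ᵥ Pi.single l 1) ⬝ᵥ (A *ᵥ q) = α := by
  have hQB : ((Q * Bᵀ) *ᵥ Pi.single l 1) ⬝ᵥ q = 0 := by
    rw [dotProduct_comm, dotProduct_mulVec, ← mulVec_transpose, transpose_mul,
      transpose_transpose, ← mulVec_mulVec, hqQ, mulVec_zero, zero_dotProduct]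
  rw [dotProduct_mulVec, ← mulVec_transpose, mulVec_mulVec, hATP, add_mulVec,
    of_mul_ite_mulVec_single, add_dotProduct, hQB, zero_add, smul_dotProduct, hq, smul_eq_mul,
    mul_one]

end

theorem lanczos_alpha_le_gamma_general (m n k : ℕ)
    (A : Matrix (Fin m) (Fin n) ℝ)
    (Q : Matrix (Fin n) (Fin k) ℝ)
    (P : Matrix (Fin m) (Fin (k + 1)) ℝ) (hP : P.transpose * P = 1)
    (B : Matrix (Fin (k + 1)) (Fin k) ℝ)
    (q : Fin n → ℝ) (hq : ∑ i, q i ^ 2 = 1) (hqQ : Q.transpose *ᵥ q = 0)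
    (α : ℝ)
    (hATP : A.transpose * P = Q * B.transpose +
      Matrix.of fun (i : Fin n) (j : Fin (k + 1)) =>
        α * q i * (if j = Fin.last k then (1 : ℝ) else 0)) :
    α ≤ specNorm (A - P * B * Q.transpose) := by
  set u := P *ᵥ Pi.single (Fin.last k) 1
  have hu : u ⬝ᵥ u = 1 := by
    rw [mulVec_dotProduct_mulVec_of_transpose_mul_self hP, single_dotProduct]
    simp
  have hq' : q ⬝ᵥ q = 1 := by simpa [dotProduct, sq] using hq
  calc α = u ⬝ᵥ (A *ᵥ q) := (lanczos_dotProduct_eq hq' hqQ hATP).symm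
    _ = u ⬝ᵥ ((A - P * B * Q.transpose) *ᵥ q) := by
        rw [sub_mul_transpose_mulVec_of_transpose_mulVec_eq_zero _ _ hqQ]
    _ ≤ specNorm (A - P * B * Q.transpose) := dotProduct_mulVec_le_specNorm _ hu hq'

/-- under the k-step Lanczos bidiagonalization relations
`A Q_k = P_{k+1} B_k` and `Aᵀ P_{k+1} = Q_k B_kᵀ + α_{k+1} q_{k+1} e_{k+1}ᵀ`,
the coefficient satisfies `α_{k+1} ≤ γ_k := ‖A − P_{k+1} B_k Q_kᵀ‖` (spectral norm). -/
theorem lanczos_alpha_le_gamma (m n k : ℕ)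
    (A : Matrix (Fin m) (Fin n) ℝ)
    (Q : Matrix (Fin n) (Fin k) ℝ) (hQ : Q.transpose * Q = 1)
    (P : Matrix (Fin m) (Fin (k + 1)) ℝ) (hP : P.transpose * P = 1)
    (B : Matrix (Fin (k + 1)) (Fin k) ℝ)
    (q : Fin n → ℝ) (hq : ∑ i, q i ^ 2 = 1) (hqQ : Q.transpose *ᵥ q = 0)
    (α : ℝ) (hα : 0 ≤ α)
    (hAQ : A * Q = P * B)
    (hATP : A.transpose * P = Q * B.transpose +
      Matrix.of fun (i : Fin n) (j : Fin (k + 1)) =>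
        α * q i * (if j = Fin.last k then (1 : ℝ) else 0)) :
    α ≤ specNorm (A - P * B * Q.transpose) :=
  lanczos_alpha_le_gamma_general m n k A Q P hP B q hq hqQ α hATP
end

section
/- Let A ∈ ℝ^{m×n} with SVD A = U[Σ;0]Vᵀ, singular values σ₁ ≥ ... ≥ σ_n, and let Q_k ∈ ℝ^{n×k} have orthonormal columns with span(Q_k) = V_k^s. Then ‖A − AQ_kQ_kᵀ‖ ≤ σ_{k+1} + σ₁·‖sin Θ(V_k, V_k^s)‖, where V_k is the span of the first k right singular vectors. -/
open Matrix
open scoped RealInnerProductSpace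


noncomputable def specCLM {a b : ℕ} (M : Matrix (Fin a) (Fin b) ℝ) :
    EuclideanSpace ℝ (Fin b) →L[ℝ] EuclideanSpace ℝ (Fin a) :=
  LinearMap.toContinuousLinearMap (Matrix.toEuclideanLin M)

lemma specNorm_eq {a b : ℕ} (M : Matrix (Fin a) (Fin b) ℝ) : specNorm M = ‖specCLM M‖ := rfl

lemma specCLM_apply {a b : ℕ} (M : Matrix (Fin a) (Fin b) ℝ) (x : EuclideanSpace ℝ (Fin b)) :
    specCLM M x = Matrix.toEuclideanLin M x := rfl

lemma specCLM_mul {a b c : ℕ} (M : Matrix (Fin a) (Fin b) ℝ) (N : Matrix (Fin b) (Fin c) ℝ) :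
    specCLM (M * N) = (specCLM M).comp (specCLM N) := by
  ext x
  simp [specCLM_apply, Matrix.toEuclideanLin_apply, Matrix.mulVec_mulVec]

lemma specCLM_add {a b : ℕ} (M N : Matrix (Fin a) (Fin b) ℝ) :
    specCLM (M + N) = specCLM M + specCLM N := by
  ext x
  simp [specCLM_apply, map_add]

lemma inner_toEuclideanLin {a b : ℕ} (M : Matrix (Fin a) (Fin b) ℝ)
    (x : EuclideanSpace ℝ (Fin b)) (y : EuclideanSpace ℝ (Fin a)) :
    ⟪Matrix.toEuclideanLin M x, y⟫ = ⟪x, Matrix.toEuclideanLin Mᵀ y⟫ := by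
  have h : (Mᵀ : Matrix (Fin b) (Fin a) ℝ) = Mᴴ := by
    ext i j; simp [Matrix.conjTranspose_apply]
  rw [h, Matrix.toEuclideanLin_conjTranspose_eq_adjoint, LinearMap.adjoint_inner_right]

lemma normSq_toEuclideanLin {a b : ℕ} (M : Matrix (Fin a) (Fin b) ℝ)
    (x : EuclideanSpace ℝ (Fin b)) :
    ‖Matrix.toEuclideanLin M x‖ ^ 2 = ⟪x, Matrix.toEuclideanLin (Mᵀ * M) x⟫ := by
  have : Matrix.toEuclideanLin (Mᵀ * M) x = Matrix.toEuclideanLin Mᵀ (Matrix.toEuclideanLin M x) := by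
    simp [Matrix.toEuclideanLin_apply, Matrix.mulVec_mulVec]
  rw [this, ← inner_toEuclideanLin, real_inner_self_eq_norm_sq]

lemma specNorm_nonneg {a b : ℕ} (M : Matrix (Fin a) (Fin b) ℝ) : 0 ≤ specNorm M :=
  norm_nonneg _

lemma specNorm_le_of_bound {a b : ℕ} (M : Matrix (Fin a) (Fin b) ℝ) {c : ℝ} (hc : 0 ≤ c)
    (h : ∀ x : EuclideanSpace ℝ (Fin b), ‖Matrix.toEuclideanLin M x‖ ≤ c * ‖x‖) :
    specNorm M ≤ c := by
  rw [specNorm_eq]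
  exact ContinuousLinearMap.opNorm_le_bound _ hc h

lemma specNorm_mul_le {a b c : ℕ} (M : Matrix (Fin a) (Fin b) ℝ) (N : Matrix (Fin b) (Fin c) ℝ) :
    specNorm (M * N) ≤ specNorm M * specNorm N := by
  rw [specNorm_eq, specNorm_eq, specNorm_eq, specCLM_mul]
  exact ContinuousLinearMap.opNorm_comp_le _ _

lemma specNorm_add_le {a b : ℕ} (M N : Matrix (Fin a) (Fin b) ℝ) :
    specNorm (M + N) ≤ specNorm M + specNorm N := by
  rw [specNorm_eq, specNorm_eq, specNorm_eq, specCLM_add]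
  exact norm_add_le _ _

lemma specNorm_isometry_le {a b : ℕ} (M : Matrix (Fin a) (Fin b) ℝ) (h : Mᵀ * M = 1) :
    specNorm M ≤ 1 := by
  apply specNorm_le_of_bound _ zero_le_one
  intro x
  rw [one_mul]
  have h2 : ‖Matrix.toEuclideanLin M x‖ ^ 2 = ‖x‖ ^ 2 := by
    rw [normSq_toEuclideanLin, h, ← real_inner_self_eq_norm_sq]
    congr 1
    simp [Matrix.toEuclideanLin_apply]
  nlinarith [h2, norm_nonneg (Matrix.toEuclideanLin M x), norm_nonneg x,
    sq_nonneg (‖Matrix.toEuclideanLin M x‖ - ‖x‖)]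

lemma specNorm_proj_compl_le {n k : ℕ} (Q : Matrix (Fin n) (Fin k) ℝ) (hQ : Qᵀ * Q = 1) :
    specNorm (1 - Q * Qᵀ) ≤ 1 := by
  apply specNorm_le_of_bound _ zero_le_one
  intro x
  rw [one_mul]
  set M : Matrix (Fin n) (Fin n) ℝ := 1 - Q * Qᵀ with hM
  have hMt : Mᵀ * M = M := by
    rw [hM]
    rw [Matrix.transpose_sub, Matrix.transpose_one, Matrix.transpose_mul,
      Matrix.transpose_transpose]
    rw [Matrix.sub_mul, Matrix.mul_sub, Matrix.mul_sub]
    have : Q * Qᵀ * (Q * Qᵀ) = Q * Qᵀ := by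
      rw [Matrix.mul_assoc, ← Matrix.mul_assoc Qᵀ Q Qᵀ, hQ, Matrix.one_mul]
    rw [this]
    simp only [Matrix.one_mul, Matrix.mul_one]
    abel
  have h2 : ‖Matrix.toEuclideanLin M x‖ ^ 2 ≤ ‖x‖ ^ 2 := by
    rw [normSq_toEuclideanLin, hMt, hM]
    have hsub : Matrix.toEuclideanLin (1 - Q * Qᵀ) x
        = x - Matrix.toEuclideanLin (Q * Qᵀ) x := by
      simp [Matrix.toEuclideanLin_apply, Matrix.sub_mulVec]
    rw [hsub, inner_sub_right, real_inner_self_eq_norm_sq]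
    have hP : Matrix.toEuclideanLin (Q * Qᵀ) x
        = Matrix.toEuclideanLin Q (Matrix.toEuclideanLin Qᵀ x) := by
      simp [Matrix.toEuclideanLin_apply, Matrix.mulVec_mulVec]
    have hpos : 0 ≤ ⟪x, Matrix.toEuclideanLin (Q * Qᵀ) x⟫ := by
      rw [hP, real_inner_comm, inner_toEuclideanLin]
      exact real_inner_self_nonneg
    linarith
  nlinarith [norm_nonneg (Matrix.toEuclideanLin M x), norm_nonneg x]

lemma diagLike_transpose_mul_self {a b : ℕ} (hba : b ≤ a) (d : Fin b → ℝ) :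
    (Matrix.of fun (i : Fin a) (j : Fin b) => if (i : ℕ) = (j : ℕ) then d j else 0)ᵀ *
      (Matrix.of fun (i : Fin a) (j : Fin b) => if (i : ℕ) = (j : ℕ) then d j else 0) =
      Matrix.diagonal (fun j => d j ^ 2) := by
  ext j j'
  rw [Matrix.mul_apply]
  rw [Finset.sum_eq_single (Fin.castLE hba j)]
  · simp only [Matrix.transpose_apply, Matrix.of_apply, Fin.coe_castLE, Matrix.diagonal_apply]
    by_cases h : j = j'
    · subst h; simp [pow_two]
    · have : ((j : ℕ) = (j' : ℕ)) = False := by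
        simp only [eq_iff_iff, iff_false]
        exact fun hc => h (Fin.ext hc)
      simp [this, h]
  · intro i _ hi
    have : ((i : ℕ) = (j : ℕ)) = False := by
      simp only [eq_iff_iff, iff_false]
      intro hc
      exact hi (Fin.ext (by simpa using hc))
    simp [Matrix.transpose_apply, this]
  · intro h
    exact absurd (Finset.mem_univ _) h

lemma specNorm_diagLike_le {a b : ℕ} (hba : b ≤ a) (d : Fin b → ℝ) (c : ℝ) (hc : 0 ≤ c)
    (hd : ∀ j, |d j| ≤ c) :
    specNorm (Matrix.of fun (i : Fin a) (j : Fin b) =>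
      if (i : ℕ) = (j : ℕ) then d j else 0) ≤ c := by
  apply specNorm_le_of_bound _ hc
  intro x
  set M := (Matrix.of fun (i : Fin a) (j : Fin b) => if (i : ℕ) = (j : ℕ) then d j else 0)
  have h2 : ‖Matrix.toEuclideanLin M x‖ ^ 2 ≤ c ^ 2 * ‖x‖ ^ 2 := by
    rw [normSq_toEuclideanLin, diagLike_transpose_mul_self hba d]
    have hdiag : Matrix.toEuclideanLin (Matrix.diagonal fun j => d j ^ 2) x
        = (WithLp.equiv 2 (Fin b → ℝ)).symm (fun j => d j ^ 2 * (WithLp.equiv 2 (Fin b → ℝ)) x j) := by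
      rw [Matrix.toEuclideanLin_apply]
      congr 1
      ext j
      exact Matrix.mulVec_diagonal _ _ _
    rw [hdiag]
    have hinner : ⟪x, (WithLp.equiv 2 (Fin b → ℝ)).symm
        (fun j => d j ^ 2 * (WithLp.equiv 2 (Fin b → ℝ)) x j)⟫
        = ∑ j, d j ^ 2 * (x j) ^ 2 := by
      rw [PiLp.inner_apply]
      apply Finset.sum_congr rfl
      intro j _
      simp [RCLike.inner_apply, pow_two]
      ring
    rw [hinner]
    have hnorm : ‖x‖ ^ 2 = ∑ j, (x j) ^ 2 := by
      rw [← real_inner_self_eq_norm_sq, PiLp.inner_apply]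
      apply Finset.sum_congr rfl
      intro j _
      simp [RCLike.inner_apply, pow_two]
    rw [hnorm, Finset.mul_sum]
    apply Finset.sum_le_sum
    intro j _
    have := hd j
    have h1 : d j ^ 2 ≤ c ^ 2 := by nlinarith [abs_nonneg (d j), le_abs_self (d j), neg_abs_le (d j)]
    nlinarith [sq_nonneg (x j)]
  nlinarith [norm_nonneg (Matrix.toEuclideanLin M x), norm_nonneg x, mul_nonneg hc (norm_nonneg x),
    sq_nonneg (‖Matrix.toEuclideanLin M x‖ - c * ‖x‖)]

lemma specNorm_mul_le_of_le {a b c : ℕ} {M : Matrix (Fin a) (Fin b) ℝ}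
    {N : Matrix (Fin b) (Fin c) ℝ} {x y : ℝ} (hM : specNorm M ≤ x) (hN : specNorm N ≤ y) :
    specNorm (M * N) ≤ x * y :=
  le_trans (specNorm_mul_le _ _)
    (mul_le_mul hM hN (specNorm_nonneg _) (le_trans (specNorm_nonneg _) hM))

/-- let `A = U [Σ;0] Vᵀ ∈ ℝ^{m×n}` with singular values
`σ₁ ≥ ... ≥ σ_n`, and let `Q_k ∈ ℝ^{n×k}` have orthonormal columns.  Then
`‖A − A Q_k Q_kᵀ‖ ≤ σ_{k+1} + σ₁·‖sin Θ(V_k, V_k^s)‖`, where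
`‖sin Θ(V_k, V_k^s)‖ = ‖V_kᵀ(I − Q_kQ_kᵀ)‖` and `V_k` consists of the first `k`
right singular vectors. -/
theorem rank_k_approx_upper_bound (m n k : ℕ) (hk : k < n) (hmn : n ≤ m)
    (A : Matrix (Fin m) (Fin n) ℝ)
    (U : Matrix (Fin m) (Fin m) ℝ) (hU : U.transpose * U = 1) (hU' : U * U.transpose = 1)
    (V : Matrix (Fin n) (Fin n) ℝ) (hV : V.transpose * V = 1) (hV' : V * V.transpose = 1)
    (σ : Fin n → ℝ) (hσnonneg : ∀ i, 0 ≤ σ i) (hσanti : Antitone σ)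
    (hA : A = U * (Matrix.of fun (i : Fin m) (j : Fin n) =>
      if (i : ℕ) = (j : ℕ) then σ j else 0) * V.transpose)
    (Q : Matrix (Fin n) (Fin k) ℝ) (hQ : Q.transpose * Q = 1)
    (Vkt : Matrix (Fin k) (Fin n) ℝ)
    (hVkt : Vkt = Matrix.of fun (i : Fin k) (j : Fin n) => V j (Fin.castLE (le_of_lt hk) i)) :
    specNorm (A - A * Q * Q.transpose) ≤
      σ ⟨k, hk⟩ + σ ⟨0, by omega⟩ * specNorm (Vkt * (1 - Q * Q.transpose)) := by
  set R : Matrix (Fin n) (Fin n) ℝ := 1 - Q * Qᵀ with hR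
  have hAR : A - A * Q * Qᵀ = A * R := by
    rw [hR, Matrix.mul_sub, Matrix.mul_one, Matrix.mul_assoc]
  set St : Matrix (Fin m) (Fin n) ℝ := Matrix.of fun (i : Fin m) (j : Fin n) =>
    if (i : ℕ) = (j : ℕ) then (if k ≤ (j : ℕ) then σ j else 0) else 0 with hStdef
  set Sh : Matrix (Fin m) (Fin n) ℝ := Matrix.of fun (i : Fin m) (j : Fin n) =>
    if (i : ℕ) = (j : ℕ) ∧ (j : ℕ) < k then σ j else 0 with hShdef
  set E : Matrix (Fin m) (Fin k) ℝ := Matrix.of fun (i : Fin m) (j : Fin k) =>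
    if (i : ℕ) = (j : ℕ) then σ (Fin.castLE (le_of_lt hk) j) else 0 with hEdef
  have hsplit : (Matrix.of fun (i : Fin m) (j : Fin n) =>
      if (i : ℕ) = (j : ℕ) then σ j else 0) = St + Sh := by
    ext i j
    simp only [hStdef, hShdef, Matrix.add_apply, Matrix.of_apply]
    by_cases h1 : (i : ℕ) = (j : ℕ)
    · by_cases h2 : k ≤ (j : ℕ)
      · rw [if_pos h1, if_pos h1, if_pos h2, if_neg (by omega)]; ring
      · rw [if_pos h1, if_pos h1, if_neg h2, if_pos (by omega)]; ring
    · rw [if_neg h1, if_neg h1, if_neg (by tauto)]; ring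
  have hEV : Sh * Vᵀ = E * Vkt := by
    ext i l
    rw [Matrix.mul_apply, Matrix.mul_apply]
    by_cases hik : (i : ℕ) < k
    · rw [Finset.sum_eq_single (⟨(i : ℕ), lt_trans hik hk⟩ : Fin n),
        Finset.sum_eq_single (⟨(i : ℕ), hik⟩ : Fin k)]
      · simp only [hShdef, hEdef, hVkt, Matrix.of_apply, Matrix.transpose_apply]
        rw [if_pos ⟨trivial, hik⟩]
        rfl
      · intro j _ hj
        simp only [hEdef, Matrix.of_apply]
        rw [if_neg]
        · ring
        · intro hc
          exact hj (Fin.ext (by simpa using hc.symm))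
      · intro h; exact absurd (Finset.mem_univ _) h
      · intro j _ hj
        simp only [hShdef, Matrix.of_apply, Matrix.transpose_apply]
        rw [if_neg]
        · ring
        · rintro ⟨hc, -⟩
          exact hj (Fin.ext (by simpa using hc.symm))
      · intro h; exact absurd (Finset.mem_univ _) h
    · rw [Finset.sum_eq_zero, Finset.sum_eq_zero]
      · intro j _
        simp only [hEdef, Matrix.of_apply]
        rw [if_neg (by intro hc; have := j.isLt; omega)]
        ring
      · intro j _
        simp only [hShdef, Matrix.of_apply, Matrix.transpose_apply]
        rw [if_neg (by rintro ⟨hc, hc2⟩; omega)]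
        ring
  have key : A * R = (U * St * Vᵀ) * R + (U * E) * (Vkt * R) := by
    rw [hA, hsplit, Matrix.mul_add, Matrix.add_mul, Matrix.add_mul]
    congr 1
    rw [Matrix.mul_assoc U Sh Vᵀ, hEV, ← Matrix.mul_assoc U E Vkt,
      Matrix.mul_assoc (U * E) Vkt R]
  have hU1 : specNorm U ≤ 1 := specNorm_isometry_le U hU
  have hVt1 : specNorm Vᵀ ≤ 1 := by
    apply specNorm_isometry_le
    rwa [Matrix.transpose_transpose]
  have hR1 : specNorm R ≤ 1 := specNorm_proj_compl_le Q hQ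
  have hSt : specNorm St ≤ σ ⟨k, hk⟩ := by
    apply specNorm_diagLike_le hmn _ _ (hσnonneg _)
    intro j
    by_cases h : k ≤ (j : ℕ)
    · rw [if_pos h, abs_of_nonneg (hσnonneg j)]
      exact hσanti h
    · rw [if_neg h, abs_zero]
      exact hσnonneg _
  have hE : specNorm E ≤ σ ⟨0, by omega⟩ := by
    apply specNorm_diagLike_le (le_trans (le_of_lt hk) hmn) _ _ (hσnonneg _)
    intro j
    rw [abs_of_nonneg (hσnonneg _)]
    exact hσanti (Fin.le_def.mpr (Nat.zero_le _))
  have b1 : specNorm ((U * St * Vᵀ) * R) ≤ ((1 * σ ⟨k, hk⟩) * 1) * 1 :=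
    specNorm_mul_le_of_le
      (specNorm_mul_le_of_le (specNorm_mul_le_of_le hU1 hSt) hVt1) hR1
  have b2 : specNorm ((U * E) * (Vkt * R)) ≤ (1 * σ ⟨0, by omega⟩) * specNorm (Vkt * R) :=
    specNorm_mul_le_of_le (specNorm_mul_le_of_le hU1 hE) (le_refl _)
  have tri := specNorm_add_le ((U * St * Vᵀ) * R) ((U * E) * (Vkt * R))
  rw [hAR, key]
  simp only [one_mul, mul_one] at b1 b2
  linarith
end

section
/- Under the discrete Picard model |u_iᵀb̂| = σ_i^{1+β} with β > 0 and noise-free data (e = 0), the coefficient ratio c_k = max_{j>k}|u_jᵀb̂| / min_{j≤k}|u_jᵀb̂| equals (σ_{k+1}/σ_k)^{1+β} and satisfies c_k < 1, hence the Frobenius-norm bound for Δ_k improves to ‖Δ_k‖_F ≤ (σ_{k+1}/σ_k)^{2+β}·√(k(n−k))·C, where C bounds the Lagrange values. -/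
open Finset Polynomial

lemma lagrange_sum_pow {k : ℕ} (v : Fin k → ℝ) (hv : Function.Injective v)
    (x : ℝ) (m : Fin k) :
    ∑ j, (Lagrange.basis Finset.univ v j).eval x * v j ^ (m : ℕ) = x ^ (m : ℕ) := by
  have hdeg : ((X : ℝ[X]) ^ (m : ℕ)).degree < (Finset.univ : Finset (Fin k)).card := by
    simp only [Polynomial.degree_X_pow, Finset.card_univ, Fintype.card_fin]
    exact_mod_cast m.2
  have h := Lagrange.eq_interpolate (s := Finset.univ) (v := v)
    (f := (X : ℝ[X]) ^ (m : ℕ)) (hv.injOn) hdeg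
  have := congrArg (Polynomial.eval x) h
  simp only [Lagrange.interpolate_apply, Polynomial.eval_finset_sum, Polynomial.eval_mul,
    Polynomial.eval_C, Polynomial.eval_pow, Polynomial.eval_X] at this
  rw [this]
  exact Finset.sum_congr rfl fun j _ => by ring

lemma frob_le {m n : ℕ} (M : Matrix (Fin m) (Fin n) ℝ) (B : ℝ) (hB : 0 ≤ B)
    (h : ∀ i j, |M i j| ≤ B) :
    Real.sqrt (∑ i, ∑ j, (M i j) ^ 2) ≤ Real.sqrt (m * n) * B := by
  have : ∑ i, ∑ j, (M i j) ^ 2 ≤ (m * n : ℝ) * B ^ 2 := by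
    calc ∑ i : Fin m, ∑ j : Fin n, (M i j) ^ 2 ≤ ∑ i : Fin m, ∑ j : Fin n, B ^ 2 := by
          refine Finset.sum_le_sum fun i _ => Finset.sum_le_sum fun j _ => ?_
          rw [← sq_abs]
          exact pow_le_pow_left₀ (abs_nonneg _) (h i j) 2
      _ = (m * n : ℝ) * B ^ 2 := by simp; ring
  calc Real.sqrt (∑ i, ∑ j, (M i j) ^ 2) ≤ Real.sqrt ((m * n : ℝ) * B ^ 2) :=
        Real.sqrt_le_sqrt this
    _ = Real.sqrt (m * n) * B := by
        rw [Real.sqrt_mul (by positivity), Real.sqrt_sq hB]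

/-- Frobenius norm of a real matrix. -/
noncomputable def frobNorm {m n : ℕ} (M : Matrix (Fin m) (Fin n) ℝ) : ℝ :=
  Real.sqrt (∑ i, ∑ j, (M i j) ^ 2)

/-- under the discrete Picard model `|u_iᵀb̂| = σ_i^{1+β}` (β > 0) with
noise-free data, the coefficient ratio `c_k = max_{j>k}|u_jᵀb̂| / min_{j≤k}|u_jᵀb̂|`
equals `(σ_{k+1}/σ_k)^{1+β} < 1`, and the Frobenius bound improves to
`‖Δ_k‖_F ≤ (σ_{k+1}/σ_k)^{2+β}·√(k(n−k))·C`, where `C` bounds the Lagrange values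
`|L_j(σ_i²)|` (i > k, j ≤ k) and `Δ_k = D₂ T_{k2} T_{k1}⁻¹ D₁⁻¹`. (1-based indices.) -/
theorem picard_model_bounds (n k : ℕ) (hk : 1 ≤ k) (hkn : k < n)
    (σ : ℕ → ℝ) (hσpos : ∀ i, 1 ≤ i → i ≤ n → 0 < σ i)
    (hσdec : ∀ i j, 1 ≤ i → i < j → j ≤ n → σ j < σ i)
    (β : ℝ) (hβ : 0 < β)
    (w : ℕ → ℝ) (hw : ∀ i, 1 ≤ i → i ≤ n → |w i| = σ i ^ (1 + β : ℝ))
    (C : ℝ)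
    (hC : ∀ i j, k < i → i ≤ n → 1 ≤ j → j ≤ k →
      |∏ l ∈ (Finset.Icc 1 k).erase j, (σ l ^ 2 - σ i ^ 2) / (σ l ^ 2 - σ j ^ 2)| ≤ C)
    (D₁ : Matrix (Fin k) (Fin k) ℝ)
    (hD₁ : D₁ = Matrix.diagonal fun j : Fin k => σ ((j : ℕ) + 1) * w ((j : ℕ) + 1))
    (D₂ : Matrix (Fin (n - k)) (Fin (n - k)) ℝ)
    (hD₂ : D₂ = Matrix.diagonal fun i : Fin (n - k) => σ (k + 1 + (i : ℕ)) * w (k + 1 + (i : ℕ)))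
    (T₁ : Matrix (Fin k) (Fin k) ℝ)
    (hT₁ : T₁ = Matrix.of fun (i j : Fin k) => (σ ((i : ℕ) + 1) ^ 2) ^ (j : ℕ))
    (T₂ : Matrix (Fin (n - k)) (Fin k) ℝ)
    (hT₂ : T₂ = Matrix.of fun (i : Fin (n - k)) (j : Fin k) => (σ (k + 1 + (i : ℕ)) ^ 2) ^ (j : ℕ))
    (Δ : Matrix (Fin (n - k)) (Fin k) ℝ) (hΔ : Δ = D₂ * T₂ * T₁⁻¹ * D₁⁻¹) :
    (((Finset.Icc (k + 1) n).sup' (Finset.nonempty_Icc.mpr (by omega)) fun j => |w j|) /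
        ((Finset.Icc 1 k).inf' (Finset.nonempty_Icc.mpr (by omega)) fun j => |w j|) =
      (σ (k + 1) / σ k) ^ (1 + β : ℝ)) ∧
    (σ (k + 1) / σ k) ^ (1 + β : ℝ) < 1 ∧
    frobNorm Δ ≤ (σ (k + 1) / σ k) ^ (2 + β : ℝ) * Real.sqrt (k * (n - k)) * C := by
  have hσmono : ∀ i j, 1 ≤ i → i ≤ j → j ≤ n → σ j ≤ σ i := by
    intro i j h1 h2 h3
    rcases eq_or_lt_of_le h2 with h | h
    · exact h ▸ le_refl _
    · exact (hσdec i j h1 h h3).le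
  have hσk1pos : 0 < σ (k + 1) := hσpos _ (by omega) (by omega)
  have hσkpos : 0 < σ k := hσpos _ (by omega) (by omega)
  have hβ1 : (0:ℝ) < 1 + β := by linarith
  have hβ2 : (0:ℝ) < 2 + β := by linarith
  -- part 1
  have hsup : ((Finset.Icc (k + 1) n).sup'
      (Finset.nonempty_Icc.mpr (by omega)) fun j => |w j|) = σ (k+1) ^ (1 + β : ℝ) := by
    apply le_antisymm
    · apply Finset.sup'_le
      intro j hj
      rw [Finset.mem_Icc] at hj
      rw [hw j (by omega) hj.2]
      exact Real.rpow_le_rpow (hσpos j (by omega) hj.2).le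
        (hσmono (k+1) j (by omega) hj.1 hj.2) hβ1.le
    · have h1 : k + 1 ∈ Finset.Icc (k+1) n := Finset.mem_Icc.mpr ⟨le_refl _, by omega⟩
      have := Finset.le_sup' (fun j => |w j|) h1
      rwa [hw (k+1) (by omega) (by omega)] at this
  have hinf : ((Finset.Icc 1 k).inf'
      (Finset.nonempty_Icc.mpr (by omega)) fun j => |w j|) = σ k ^ (1 + β : ℝ) := by
    apply le_antisymm
    · have h1 : k ∈ Finset.Icc 1 k := Finset.mem_Icc.mpr ⟨hk, le_refl _⟩
      have := Finset.inf'_le (fun j => |w j|) h1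
      rwa [hw k hk (by omega)] at this
    · apply Finset.le_inf'
      intro j hj
      rw [Finset.mem_Icc] at hj
      rw [hw j hj.1 (by omega)]
      exact Real.rpow_le_rpow hσkpos.le
        (hσmono j k hj.1 hj.2 (by omega)) hβ1.le
  refine ⟨?_, ?_, ?_⟩
  · rw [hsup, hinf, ← Real.div_rpow hσk1pos.le hσkpos.le]
  · exact Real.rpow_lt_one (by positivity)
      ((div_lt_one hσkpos).mpr (hσdec k (k+1) hk (by omega) (by omega))) hβ1
  -- part 3
  · have hC0 : 0 ≤ C := le_trans (abs_nonneg _) (hC (k+1) 1 (by omega) (by omega) le_rfl hk)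
    set v : Fin k → ℝ := fun j => σ ((j:ℕ) + 1) ^ 2 with hvdef
    set x : Fin (n-k) → ℝ := fun i => σ (k + 1 + (i:ℕ)) ^ 2 with hxdef
    have hsq : ∀ i j, 1 ≤ i → i < j → j ≤ n → σ j ^ 2 < σ i ^ 2 := by
      intro i j h1 h2 h3
      exact pow_lt_pow_left₀ (hσdec i j h1 h2 h3) (hσpos j (by omega) h3).le (by norm_num)
    have hvlt : ∀ a b : Fin k, a < b → v b < v a := by
      intro a b h
      have hab : (a : ℕ) < (b : ℕ) := h
      exact hsq ((a:ℕ)+1) ((b:ℕ)+1) (by omega) (by omega) (by omega)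
    have hvinj : Function.Injective v := by
      intro a b hab
      rcases lt_trichotomy a b with h | h | h
      · exact absurd hab (hvlt a b h).ne'
      · exact h
      · exact absurd hab (hvlt b a h).ne
    have hT₁v : T₁ = Matrix.vandermonde v := by rw [hT₁]; rfl
    have hdet : IsUnit T₁.det := by
      rw [hT₁v, isUnit_iff_ne_zero]
      exact Matrix.det_vandermonde_ne_zero_iff.mpr hvinj
    set L : Matrix (Fin (n-k)) (Fin k) ℝ :=
      Matrix.of fun i j => (Lagrange.basis Finset.univ v j).eval (x i) with hLdef
    have hLT : L * T₁ = T₂ := by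
      ext i m
      rw [hT₁, hT₂]
      simpa [Matrix.mul_apply, hLdef] using lagrange_sum_pow v hvinj (x i) m
    have hL : T₂ * T₁⁻¹ = L := by
      rw [← hLT, Matrix.mul_nonsing_inv_cancel_right _ _ hdet]
    have hΔL : Δ = D₂ * L * D₁⁻¹ := by
      rw [hΔ, Matrix.mul_assoc D₂ T₂ T₁⁻¹, hL]
    have hdne : ∀ j : Fin k, σ ((j:ℕ)+1) * w ((j:ℕ)+1) ≠ 0 := by
      intro j
      have hjk := j.2
      have haj : 0 < σ ((j:ℕ)+1) := hσpos _ (by omega) (by omega)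
      have hwj : |w ((j:ℕ)+1)| = σ ((j:ℕ)+1) ^ (1+β:ℝ) := hw _ (by omega) (by omega)
      have hwpos : 0 < |w ((j:ℕ)+1)| := hwj ▸ Real.rpow_pos_of_pos haj _
      exact mul_ne_zero haj.ne' (fun h => by simp [h] at hwpos)
    have hD₁inv : D₁⁻¹ = Matrix.diagonal fun j : Fin k => (σ ((j:ℕ)+1) * w ((j:ℕ)+1))⁻¹ := by
      apply Matrix.inv_eq_right_inv
      rw [hD₁, Matrix.diagonal_mul_diagonal, ← Matrix.diagonal_one]
      have : (fun j : Fin k => σ ((j:ℕ)+1) * w ((j:ℕ)+1) * (σ ((j:ℕ)+1) * w ((j:ℕ)+1))⁻¹)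
          = fun _ => (1:ℝ) := funext fun j => mul_inv_cancel₀ (hdne j)
      rw [this]
    have hΔe : ∀ (i : Fin (n-k)) (j : Fin k),
        Δ i j = (σ (k+1+(i:ℕ)) * w (k+1+(i:ℕ))) * L i j * (σ ((j:ℕ)+1) * w ((j:ℕ)+1))⁻¹ := by
      intro i j
      rw [hΔL, hD₂, hD₁inv, Matrix.mul_diagonal, Matrix.diagonal_mul]
    -- bound on each Lagrange-value entry
    have hLC : ∀ (i : Fin (n-k)) (j : Fin k), |L i j| ≤ C := by
      intro i j
      have hLval : L i j = ∏ l ∈ (Finset.Icc 1 k).erase ((j:ℕ)+1),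
          (σ l ^ 2 - σ (k+1+(i:ℕ)) ^ 2) / (σ l ^ 2 - σ ((j:ℕ)+1) ^ 2) := by
        have : L i j = ∏ l ∈ Finset.univ.erase j,
            (v j - v l)⁻¹ * (x i - v l) := by
          simp only [hLdef, Matrix.of_apply, Lagrange.basis, Polynomial.eval_prod]
          refine Finset.prod_congr rfl fun l _ => ?_
          simp [Lagrange.basisDivisor]
        rw [this]
        refine Finset.prod_bij' (fun l _ => (l:ℕ)+1)
          (fun m hm => (⟨m - 1, by
            rw [Finset.mem_erase, Finset.mem_Icc] at hm; omega⟩ : Fin k)) ?_ ?_ ?_ ?_ ?_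
        · intro a ha
          have hak := a.2
          rw [Finset.mem_erase] at ha
          show ((a:ℕ)+1) ∈ (Finset.Icc 1 k).erase ((j:ℕ)+1)
          rw [Finset.mem_erase, Finset.mem_Icc]
          exact ⟨fun hcon => ha.1 (Fin.ext (by omega)), by omega, by omega⟩
        · intro a ha
          rw [Finset.mem_erase, Finset.mem_Icc] at ha
          rw [Finset.mem_erase]
          refine ⟨?_, Finset.mem_univ _⟩
          intro hcon
          apply ha.1
          have := congrArg Fin.val hcon
          simp only at this
          omega
        · intro a _; exact Fin.ext (by simp)
        · intro a ha
          rw [Finset.mem_erase, Finset.mem_Icc] at ha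
          simp only
          omega
        · intro a ha
          rw [Finset.mem_erase] at ha
          show (v j - v a)⁻¹ * (x i - v a)
            = (σ ((a:ℕ)+1) ^ 2 - σ (k+1+(i:ℕ)) ^ 2) / (σ ((a:ℕ)+1) ^ 2 - σ ((j:ℕ)+1) ^ 2)
          have h1 : σ ((a:ℕ)+1) ^ 2 - σ (k+1+(i:ℕ)) ^ 2 = -(x i - v a) := by
            simp only [hvdef, hxdef]; ring
          have h2 : σ ((a:ℕ)+1) ^ 2 - σ ((j:ℕ)+1) ^ 2 = -(v j - v a) := by
            simp only [hvdef]; ring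
          rw [h1, h2, neg_div_neg_eq, inv_mul_eq_div]
      rw [hLval]
      exact hC (k+1+(i:ℕ)) ((j:ℕ)+1) (by omega) (by have := i.2; omega) (by omega) (by have := j.2; omega)
    -- entry bound for Δ
    set B : ℝ := (σ (k + 1) / σ k) ^ (2 + β : ℝ) with hBdef
    have hB0 : 0 ≤ B := Real.rpow_nonneg (by positivity) _
    have hσw : ∀ m, 1 ≤ m → m ≤ n → σ m * |w m| = σ m ^ (2 + β : ℝ) := by
      intro m h1 h2
      have hpos := hσpos m h1 h2
      rw [hw m h1 h2]
      calc σ m * σ m ^ (1+β:ℝ) = σ m ^ (1:ℝ) * σ m ^ (1+β:ℝ) := by rw [Real.rpow_one]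
        _ = σ m ^ ((1:ℝ) + (1+β)) := (Real.rpow_add hpos _ _).symm
        _ = σ m ^ (2+β:ℝ) := by ring_nf
    have hΔbound : ∀ (i : Fin (n-k)) (j : Fin k), |Δ i j| ≤ B * C := by
      intro i j
      have hi1 : 1 ≤ k+1+(i:ℕ) := by omega
      have hi2 : k+1+(i:ℕ) ≤ n := by have := i.2; omega
      have hj1 : 1 ≤ (j:ℕ)+1 := by omega
      have hj2 : (j:ℕ)+1 ≤ k := by have := j.2; omega
      have hai : 0 < σ (k+1+(i:ℕ)) := hσpos _ hi1 hi2
      have haj : 0 < σ ((j:ℕ)+1) := hσpos _ (by omega) (by omega)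
      have hwj : |w ((j:ℕ)+1)| = σ ((j:ℕ)+1) ^ (1+β:ℝ) := hw _ (by omega) (by omega)
      have hwjne : σ ((j:ℕ)+1) * w ((j:ℕ)+1) ≠ 0 := by
        intro hcon
        have : |σ ((j:ℕ)+1) * w ((j:ℕ)+1)| = 0 := by rw [hcon]; simp
        rw [abs_mul, abs_of_pos haj, hwj] at this
        have : (0:ℝ) < σ ((j:ℕ)+1) * σ ((j:ℕ)+1) ^ (1+β:ℝ) := by positivity
        linarith
      rw [hΔe i j, abs_mul, abs_mul, abs_inv, abs_mul, abs_mul,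
        abs_of_pos hai, abs_of_pos haj,
        hσw _ hi1 hi2, hσw _ (by omega) (by omega)]
      have hnum : σ (k+1+(i:ℕ)) ^ (2+β:ℝ) ≤ σ (k+1) ^ (2+β:ℝ) :=
        Real.rpow_le_rpow hai.le (hσmono (k+1) _ (by omega) (by omega) hi2) hβ2.le
      have hden : σ k ^ (2+β:ℝ) ≤ σ ((j:ℕ)+1) ^ (2+β:ℝ) :=
        Real.rpow_le_rpow hσkpos.le (hσmono _ k (by omega) hj2 (by omega)) hβ2.le
      have hdenpos : (0:ℝ) < σ ((j:ℕ)+1) ^ (2+β:ℝ) := Real.rpow_pos_of_pos haj _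
      have hkpow : (0:ℝ) < σ k ^ (2+β:ℝ) := Real.rpow_pos_of_pos hσkpos _
      have hBeq : B = σ (k+1) ^ (2+β:ℝ) / σ k ^ (2+β:ℝ) := by
        rw [hBdef, Real.div_rpow hσk1pos.le hσkpos.le]
      calc σ (k+1+(i:ℕ)) ^ (2+β:ℝ) * |L i j| * (σ ((j:ℕ)+1) ^ (2+β:ℝ))⁻¹
          = (σ (k+1+(i:ℕ)) ^ (2+β:ℝ) / σ ((j:ℕ)+1) ^ (2+β:ℝ)) * |L i j| := by ring
        _ ≤ (σ (k+1) ^ (2+β:ℝ) / σ k ^ (2+β:ℝ)) * C := by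
            apply mul_le_mul
            · exact div_le_div₀ (by positivity) hnum hkpow hden
            · exact hLC i j
            · exact abs_nonneg _
            · positivity
        _ = B * C := by rw [hBeq]
    -- conclude
    have := frob_le Δ (B * C) (mul_nonneg hB0 hC0) hΔbound
    unfold frobNorm
    refine le_trans this (le_of_eq ?_)
    have hcast : ((n - k : ℕ) : ℝ) * (k : ℝ) = (k : ℝ) * ((n:ℝ) - (k:ℝ)) := by
      rw [Nat.cast_sub hkn.le]; ring
    rw [hcast]
    ring
end
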